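/- arXiv:1902.02625 — 5 statements merged into one kernel-verified Lean document; each statement's English description precedes it below -/
import Mathlib

section
/- For any positive integers k and m, the number of k-multipartitions of m is at most (k+1) times the number of k-multipartitions of m-1, i.e., p_k(m) ≤ (k+1)·p_k(m-1). -/
/-!
A `k`-multipartition of `m + 1` either has a part `1` in some component `i`, and then arises from
a `k`-multipartition of `m` by adding a part `1` to component `i`; or it has no part `1` at all.
In the second case, replacing any part `a` of it by `a - 1` parts `1` gives a `k`-multipartition
of `m` whose parts `1` all lie in one component, and merging them back into a single part, plus one
box, recovers the original. So every `k`-multipartition of `m + 1` is obtained from one of `m` by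
one of `k + 1` operations.
-/

/-- Number of `k`-multipartitions of `m`: `k`-tuples of partitions with total size `m`. -/
noncomputable def pk (k m : ℕ) : ℕ :=
  Nat.card { f : Fin k → Σ j : ℕ, Nat.Partition j // ∑ i, (f i).1 = m }

open Function Multiset

def breakPart (s : Multiset ℕ) (a : ℕ) : Multiset ℕ :=
  s.erase a + replicate (a - 1) 1

def mergeOnes (s : Multiset ℕ) : Multiset ℕ :=
  if 1 ∈ s then (count 1 s + 1) ::ₘ s.filter (· ≠ 1) else s

lemma sum_breakPart_add_one {s : Multiset ℕ} {a : ℕ} (ha : a ∈ s) (ha₀ : 0 < a) :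
    (breakPart s a).sum + 1 = s.sum := by
  have := sum_erase ha
  simp only [breakPart, sum_add, sum_replicate, smul_eq_mul, mul_one]
  omega

lemma mergeOnes_breakPart {s : Multiset ℕ} {a : ℕ} (ha : a ∈ s) (ha₀ : 0 < a) (h₁ : 1 ∉ s) :
    mergeOnes (breakPart s a) = s := by
  have ha₁ : a ≠ 1 := by rintro rfl; exact h₁ ha
  have h₁' : 1 ∉ s.erase a := fun h => h₁ (mem_of_mem_erase h)
  have hmem : 1 ∈ breakPart s a := mem_add.2 (Or.inr (mem_replicate.2 ⟨by omega, rfl⟩))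
  rw [mergeOnes, if_pos hmem, breakPart, count_add, count_eq_zero.2 h₁', count_replicate_self,
    filter_add, filter_eq_self.2 fun x hx => ne_of_mem_of_not_mem hx h₁',
    filter_eq_nil.2 fun x hx hx₁ => hx₁ (eq_of_mem_replicate hx), add_zero, zero_add,
    Nat.sub_add_cancel ha₀, cons_erase ha]

def multipartitions (ι : Type*) [Fintype ι] (m : ℕ) : Set (ι → Multiset ℕ) :=
  {f | (∀ i, ∀ a ∈ f i, 0 < a) ∧ ∑ i, (f i).sum = m}

lemma Nat.Partition.sigma_mk_parts (p : Σ n, Nat.Partition n) :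
    (⟨p.2.parts.sum, p.2.parts, p.2.parts_pos, rfl⟩ : Σ n, Nat.Partition n) = p := by
  obtain ⟨_, s, _, rfl⟩ := p
  rfl

def multipartitionsEquiv (ι : Type*) [Fintype ι] (m : ℕ) :
    {f : ι → Σ n, Nat.Partition n // ∑ i, (f i).1 = m} ≃ multipartitions ι m where
  toFun f := ⟨fun i => (f.1 i).2.parts, fun i _ ha => (f.1 i).2.parts_pos ha,
    by simpa only [Nat.Partition.parts_sum] using f.2⟩
  invFun g := ⟨fun i => ⟨(g.1 i).sum, g.1 i, g.2.1 i _, rfl⟩, g.2.2⟩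
  left_inv f := Subtype.ext <| funext fun i => Nat.Partition.sigma_mk_parts (f.1 i)
  right_inv _ := rfl

lemma pk_eq_ncard (k m : ℕ) : pk k m = (multipartitions (Fin k) m).ncard :=
  (Nat.card_congr (multipartitionsEquiv (Fin k) m)).trans (Nat.card_coe_set_eq _)

lemma finite_setOf_pos_sum_le (m : ℕ) :
    {s : Multiset ℕ | (∀ a ∈ s, 0 < a) ∧ s.sum ≤ m}.Finite :=
  ((Set.finite_Iic m).biUnion fun n _ => Set.finite_range (Nat.Partition.parts (n := n))).subset
    fun s ⟨hpos, hsum⟩ => Set.mem_biUnion (Set.mem_Iic.2 hsum) ⟨⟨s, hpos _, rfl⟩, rfl⟩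

section

variable {ι : Type*} [Fintype ι]

lemma multipartitions_finite (m : ℕ) : (multipartitions ι m).Finite :=
  (Set.Finite.pi fun _ => finite_setOf_pos_sum_le m).subset fun f ⟨hpos, hsum⟩ i _ =>
    ⟨hpos i, hsum ▸ Finset.single_le_sum (fun j _ => Nat.zero_le (f j).sum) (Finset.mem_univ i)⟩

variable [DecidableEq ι]

lemma sum_apply_update_add {M α : Type*} [AddCommMonoid M] (φ : α → M) (f : ι → α) (i : ι)
    (t : α) : ∑ j, φ (update f i t j) + φ (f i) = ∑ j, φ (f j) + φ t := by
  rw [← Finset.add_sum_erase _ _ (Finset.mem_univ i), ← Finset.add_sum_erase _ _ (Finset.mem_univ i),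
    update_self, Finset.sum_congr rfl fun j hj => by rw [update_of_ne (Finset.ne_of_mem_erase hj)]]
  abel

lemma update_breakPart_mem {m : ℕ} {f : ι → Multiset ℕ} (hf : f ∈ multipartitions ι (m + 1))
    {i : ι} {a : ℕ} (ha : a ∈ f i) : update f i (breakPart (f i) a) ∈ multipartitions ι m := by
  obtain ⟨hpos, hsum⟩ := hf
  refine ⟨fun j x hx => ?_, ?_⟩
  · rcases eq_or_ne j i with rfl | hj
    · rw [update_self, breakPart, mem_add] at hx
      rcases hx with hx | hx
      · exact hpos j x (mem_of_mem_erase hx)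
      · rw [eq_of_mem_replicate hx]; exact one_pos
    · rw [update_of_ne hj] at hx
      exact hpos j x hx
  · have := sum_apply_update_add Multiset.sum f i (breakPart (f i) a)
    have := sum_breakPart_add_one ha (hpos i a ha)
    omega

def addBox : Option ι × (ι → Multiset ℕ) → ι → Multiset ℕ
  | (some i, g) => update g i (1 ::ₘ g i)
  | (none, g) => fun j => mergeOnes (g j)

lemma multipartitions_succ_subset (m : ℕ) :
    multipartitions ι (m + 1) ⊆ addBox '' (Set.univ ×ˢ multipartitions ι m) := by
  intro f hf
  by_cases h₁ : ∃ i, 1 ∈ f i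
  · obtain ⟨i, hi⟩ := h₁
    refine ⟨(some i, update f i (breakPart (f i) 1)), ⟨trivial, update_breakPart_mem hf hi⟩, ?_⟩
    simp [addBox, breakPart, cons_erase hi]
  · simp only [not_exists] at h₁
    obtain ⟨i, a, ha⟩ : ∃ i, ∃ a, a ∈ f i := by
      obtain ⟨i, -, hi⟩ := Finset.exists_ne_zero_of_sum_ne_zero (hf.2.trans_ne m.succ_ne_zero)
      exact ⟨i, exists_mem_of_ne_zero fun h => hi (by rw [h, sum_zero])⟩
    refine ⟨(none, update f i (breakPart (f i) a)), ⟨trivial, update_breakPart_mem hf ha⟩,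
      funext fun j => ?_⟩
    rcases eq_or_ne j i with rfl | hj
    · simp [addBox, mergeOnes_breakPart ha (hf.1 j a ha) (h₁ j)]
    · simp [addBox, hj, mergeOnes, h₁ j]

lemma ncard_multipartitions_succ_le (m : ℕ) :
    (multipartitions ι (m + 1)).ncard ≤ (Fintype.card ι + 1) * (multipartitions ι m).ncard := by
  have hfin := (Set.finite_univ (α := Option ι)).prod (multipartitions_finite (ι := ι) m)
  calc (multipartitions ι (m + 1)).ncard
      ≤ (addBox '' (Set.univ ×ˢ multipartitions ι m)).ncard :=
        Set.ncard_le_ncard (multipartitions_succ_subset m) (hfin.image _)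
    _ ≤ (Set.univ ×ˢ multipartitions ι m).ncard := Set.ncard_image_le hfin
    _ = (Fintype.card ι + 1) * (multipartitions ι m).ncard := by
        rw [Set.ncard_prod, Set.ncard_univ, Nat.card_eq_fintype_card, Fintype.card_option]

end

theorem multipartition_recursion_general (k m : ℕ) :
    pk k m ≤ (k + 1) * pk k (m - 1) := by
  cases m with
  | zero => exact Nat.le_mul_of_pos_left _ k.succ_pos
  | succ m => simpa [pk_eq_ncard] using ncard_multipartitions_succ_le (ι := Fin k) m

theorem multipartition_recursion (k m : ℕ) (hk : 1 ≤ k) (hm : 1 ≤ m) :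
    pk k m ≤ (k + 1) * pk k (m - 1) :=
  multipartition_recursion_general k m
end

section
/- For any integers 1 ≤ k ≤ n, the number of partitions of n that are not k-cores satisfies p(n) − c_k(n) ≤ (k+1)·p(n−k), where p denotes the partition function and c_k(n) the number of k-core partitions of n. -/
/-
Encode a partition of `n` by its beta-set `B`: the `n` first-column hook lengths of the partition
padded with zero parts, read as beads on an abacus with `k` runners (residue classes mod `k`).
A hook of length divisible by `k` is a bead lying a multiple of `k` above a gap on its runner, so a
non-core has a movable bead `s ∈ B` with `s - k ∉ B`, and sliding it to `s - k` gives the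
beta-set of a partition of `n - k`.

The bead to slide is the lowest movable bead of a canonical runner: the least *flush* runner
(one whose lowest movable bead lands on top of a completely filled initial segment), or, if there
is none, the least runner carrying a movable bead. In the flush case the slid bead is the top of
the filled initial segment of its runner, so it is recovered from the runner, used as label
`0, …, k - 1`. Otherwise the slid bead is still the lowest movable bead of its runner and the set
of runners carrying a movable bead is unchanged, so runner and bead are both recovered from the
image alone, with label `k`. This gives an injection from non-cores of `n` into
`Fin (k + 1) ×` partitions of `n - k`.
-/

/-- Number of partitions of `n`. -/
noncomputable def pfun (n : ℕ) : ℕ := Nat.card (Nat.Partition n)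

/-- The `i`-th largest part of a partition's multiset of parts (0-indexed, 0 if absent). -/
def partNth (μ : Multiset ℕ) (i : ℕ) : ℕ := (μ.sort (· ≥ ·)).getD i 0

/-- Hook length at cell `(i, j)` (0-indexed) of the Young diagram of `μ`. -/
def hookLen (μ : Multiset ℕ) (i j : ℕ) : ℕ :=
  (partNth μ i - j) + ((μ.filter (fun x => j < x)).card - i) - 1

/-- A partition is a `k`-core if no hook length is divisible by `k`. -/
def IsCore (k : ℕ) {n : ℕ} (α : Nat.Partition n) : Prop :=
  ∀ i j, j < partNth α.parts i → ¬ (k ∣ hookLen α.parts i j)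

/-- Number of `k`-core partitions of `n`. -/
noncomputable def ck (k n : ℕ) : ℕ := Nat.card {α : Nat.Partition n // IsCore k α}

open Finset

namespace List

theorem lt_getD_iff_lt_countP {j : ℕ} :
    ∀ {l : List ℕ}, l.Pairwise (· ≥ ·) → ∀ i, j < l.getD i 0 ↔ i < l.countP (j < ·)
  | [], _, i => by simp
  | a :: t, hs, i => by
    obtain ⟨ha, ht⟩ := List.pairwise_cons.mp hs
    by_cases hja : j < a
    · cases i with
      | zero => simp [hja]
      | succ i =>
        rw [getD_cons_succ, lt_getD_iff_lt_countP ht i]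
        simp [hja]
    · have hzero : t.countP (j < ·) = 0 :=
        List.countP_eq_zero.mpr fun x hx => by
          simpa using fun hjx => hja (lt_of_lt_of_le hjx (ha x hx))
      have hle : ∀ i, t.getD i 0 ≤ j := fun i => by
        rcases lt_or_ge i t.length with h | h
        · rw [List.getD_eq_getElem _ _ h]
          exact (ha _ (t.getElem_mem h)).trans (not_lt.mp hja)
        · rw [List.getD_eq_default _ _ h]
          exact Nat.zero_le j
      cases i with
      | zero => simp [hja, hzero]
      | succ i =>
        rw [getD_cons_succ]
        simpa [hja, hzero] using hle i

theorem sum_range_getD (l : List ℕ) : ∑ i ∈ Finset.range l.length, l.getD i 0 = l.sum := by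
  induction l with
  | nil => simp
  | cons a t ih =>
    rw [length_cons, Finset.sum_range_succ', sum_cons, ← ih]
    simp only [getD_cons_succ, getD_cons_zero]
    omega

theorem getElem_add_le_of_pairwise_gt {l : List ℕ} (hl : l.Pairwise (· > ·)) {i : ℕ} :
    ∀ d (h : i + d < l.length), l[i + d] + d ≤ l[i]
  | 0, _ => le_rfl
  | d + 1, h => by
    have hd : i + d < l.length := by omega
    have := getElem_add_le_of_pairwise_gt hl d hd
    have := List.pairwise_iff_getElem.mp hl (i + d) (i + (d + 1)) hd h (by omega)
    omega

theorem getD_filter_pos_of_pairwise_ge :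
    ∀ {l : List ℕ}, l.Pairwise (· ≥ ·) → ∀ i, (l.filter (0 < ·)).getD i 0 = l.getD i 0
  | [], _, i => by simp
  | a :: t, hs, i => by
    obtain ⟨ha, ht⟩ := List.pairwise_cons.mp hs
    by_cases h0 : 0 < a
    · cases i with
      | zero => simp [h0]
      | succ i =>
        rw [getD_cons_succ, ← getD_filter_pos_of_pairwise_ge ht i]
        simp [h0]
    · have hzero : ∀ x ∈ a :: t, x = 0 := by
        simp only [mem_cons, forall_eq_or_imp]
        exact ⟨by omega, fun x hx => by have := ha x hx; omega⟩
      rw [List.filter_eq_nil_iff.mpr fun x hx => by simp [hzero x hx], getD_nil]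
      rcases lt_or_ge i (a :: t).length with h | h
      · rw [List.getD_eq_getElem _ _ h, hzero _ (List.getElem_mem h)]
      · rw [List.getD_eq_default _ _ h]

theorem map_range_getD {l : List ℕ} {N : ℕ} (h : l.length ≤ N) :
    (List.range N).map (l.getD · 0) = l ++ List.replicate (N - l.length) 0 := by
  apply List.ext_getElem (by simp; omega)
  intro i h₁ h₂
  simp only [getElem_map, getElem_range, getElem_append, getElem_replicate]
  split_ifs with hi
  · exact List.getD_eq_getElem _ _ hi
  · exact List.getD_eq_default _ _ (not_lt.mp hi)

end List

theorem lt_partNth_iff (μ : Multiset ℕ) (i j : ℕ) :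
    j < partNth μ i ↔ i < (μ.filter (j < ·)).card := by
  rw [partNth, List.lt_getD_iff_lt_countP (μ.pairwise_sort _),
    ← Multiset.coe_countP, Multiset.sort_eq, Multiset.countP_eq_card_filter]

theorem partNth_antitone (μ : Multiset ℕ) : Antitone (partNth μ) := by
  intro i i' hii'
  by_contra! hlt
  have := (lt_partNth_iff μ i' (partNth μ i)).mp hlt
  have := (lt_partNth_iff μ i (partNth μ i)).mpr (lt_of_le_of_lt hii' this)
  omega

theorem sum_partNth {μ : Multiset ℕ} {N : ℕ} (hN : μ.card ≤ N) :
    ∑ i ∈ range N, partNth μ i = μ.sum := by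
  have hlen : (μ.sort (· ≥ ·)).length ≤ N := by rwa [Multiset.length_sort]
  simp only [partNth]
  rw [← Finset.sum_range_add_sum_Ico _ hlen, List.sum_range_getD, Finset.sum_eq_zero, add_zero]
  · conv_rhs => rw [← μ.sort_eq (· ≥ ·)]
    rfl
  · intro i hi
    exact List.getD_eq_default _ _ (Finset.mem_Ico.mp hi).1

theorem eq_coe_filter_pos_partNth {μ : Multiset ℕ} (hpos : ∀ x ∈ μ, 0 < x) {N : ℕ}
    (hN : μ.card ≤ N) : μ = ↑(((List.range N).map (partNth μ)).filter (0 < ·)) := by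
  have hlen : (μ.sort (· ≥ ·)).length ≤ N := by rwa [Multiset.length_sort]
  have hfilter : (μ.sort (· ≥ ·)).filter (0 < ·) = μ.sort (· ≥ ·) :=
    List.filter_eq_self.mpr fun x hx => by simpa using hpos x ((Multiset.mem_sort _).mp hx)
  rw [show partNth μ = fun i => (μ.sort (· ≥ ·)).getD i 0 from rfl, List.map_range_getD hlen,
    List.filter_append, hfilter, List.filter_replicate]
  simp

theorem Nat.Partition.card_parts_le {n : ℕ} (α : Nat.Partition n) : α.parts.card ≤ n := by
  simpa [α.parts_sum] using Multiset.card_nsmul_le_sum fun x hx => α.parts_pos hx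

def beta (μ : Multiset ℕ) (N : ℕ) : Finset ℕ :=
  (range N).image fun i => partNth μ i + (N - 1 - i)

theorem strictAntiOn_beta (μ : Multiset ℕ) (N : ℕ) :
    StrictAntiOn (fun i => partNth μ i + (N - 1 - i)) (Set.Iio N) := by
  intro i _ i' hi' hii'
  have := partNth_antitone μ hii'.le
  simp only [Set.mem_Iio] at hi'
  dsimp only
  omega

theorem mem_beta {μ : Multiset ℕ} {N b : ℕ} :
    b ∈ beta μ N ↔ ∃ i < N, partNth μ i + (N - 1 - i) = b := by
  simp [beta]

theorem card_beta (μ : Multiset ℕ) (N : ℕ) : (beta μ N).card = N := by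
  rw [beta, card_image_of_injOn, card_range]
  simpa using (strictAntiOn_beta μ N).injOn

theorem sum_beta {μ : Multiset ℕ} {N : ℕ} (hN : μ.card ≤ N) :
    (beta μ N).sum id = μ.sum + ∑ i ∈ range N, i := by
  rw [beta, sum_image (by simpa using (strictAntiOn_beta μ N).injOn)]
  simp only [id, sum_add_distrib, sum_partNth hN, Finset.sum_range_reflect (fun i => i) N]

theorem sort_beta (μ : Multiset ℕ) (N : ℕ) :
    (beta μ N).sort (· ≥ ·) = (List.range N).map fun i => partNth μ i + (N - 1 - i) := by
  have hpairwise : ((List.range N).map fun i => partNth μ i + (N - 1 - i)).Pairwise (· > ·) := by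
    rw [List.pairwise_map]
    refine List.pairwise_lt_range.imp_of_mem fun hi hi' hii' => ?_
    exact strictAntiOn_beta μ N (by simpa using hi) (by simpa using hi') hii'
  apply List.Perm.eq_of_pairwise' (Finset.pairwise_sort _ _) (hpairwise.imp le_of_lt)
  rw [List.perm_ext_iff_of_nodup (Finset.sort_nodup _ _) (hpairwise.imp ne_of_gt)]
  intro b
  simp [mem_beta]

theorem eq_of_beta_eq {μ μ' : Multiset ℕ} {N : ℕ} (hpos : ∀ x ∈ μ, 0 < x)
    (hpos' : ∀ x ∈ μ', 0 < x) (hN : μ.card ≤ N) (hN' : μ'.card ≤ N)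
    (h : beta μ N = beta μ' N) : μ = μ' := by
  have hmap := sort_beta μ N
  rw [h, sort_beta μ' N] at hmap
  have : (List.range N).map (partNth μ) = (List.range N).map (partNth μ') := by
    rw [List.map_inj_left] at hmap ⊢
    intro i hi
    have := hmap i hi
    omega
  rw [eq_coe_filter_pos_partNth hpos hN, eq_coe_filter_pos_partNth hpos' hN', this]

/-- The `i`-th part of the partition with beta-set `T`: the number of gaps below the `i`-th
largest element of `T`. -/
def betaPart (T : Finset ℕ) (i : ℕ) : ℕ := (T.sort (· ≥ ·)).getD i 0 - (T.card - 1 - i)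

def ofBeta (T : Finset ℕ) : Multiset ℕ :=
  ↑(((List.range T.card).map (betaPart T)).filter (0 < ·))

theorem betaPart_add {T : Finset ℕ} {i : ℕ} (hi : i < T.card) :
    betaPart T i + (T.card - 1 - i) = (T.sort (· ≥ ·)).getD i 0 := by
  have hi' : i < (T.sort (· ≥ ·)).length := by rwa [length_sort]
  have := List.getElem_add_le_of_pairwise_gt T.sortedGT_sort.pairwise (i := i) (T.card - 1 - i)
    (by rw [length_sort]; omega)
  rw [betaPart, List.getD_eq_getElem _ _ hi']
  omega

theorem betaPart_antitone (T : Finset ℕ) : Antitone (betaPart T) := by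
  intro i i' hii'
  obtain ⟨d, rfl⟩ := Nat.exists_eq_add_of_le hii'
  have hlen : (T.sort (· ≥ ·)).length = T.card := length_sort _
  rcases lt_or_ge (i + d) T.card with h | h
  · have := List.getElem_add_le_of_pairwise_gt T.sortedGT_sort.pairwise d (hlen ▸ h)
    rw [betaPart, betaPart, List.getD_eq_getElem _ _ (by omega),
      List.getD_eq_getElem _ _ (by omega)]
    omega
  · rw [betaPart, List.getD_eq_default _ _ (by omega), Nat.zero_sub]
    exact Nat.zero_le _

theorem pos_of_mem_ofBeta {T : Finset ℕ} {x : ℕ} (hx : x ∈ ofBeta T) : 0 < x := by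
  simpa using (List.mem_filter.mp (Multiset.mem_coe.mp hx)).2

theorem sum_ofBeta_add (T : Finset ℕ) :
    (ofBeta T).sum + ∑ i ∈ range T.card, i = T.sum id := by
  have hfilter : ∀ l : List ℕ, (l.filter (0 < ·)).sum = l.sum := fun l => by
    induction l with
    | nil => rfl
    | cons a t ih => by_cases h : 0 < a <;> simp [h, ih]; omega
  have hmap :
      ((List.range T.card).map (betaPart T)).sum = ∑ i ∈ range T.card, betaPart T i := by
    simp [Finset.sum, Multiset.range]
  have hsort : (T.sort (· ≥ ·)).sum = T.sum id := by
    rw [← Multiset.sum_coe, sort_eq, Finset.sum, Multiset.map_id]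
  rw [ofBeta, Multiset.sum_coe, hfilter, hmap, ← Finset.sum_range_reflect (fun i => i),
    ← sum_add_distrib, sum_congr rfl fun i hi => betaPart_add (mem_range.mp hi), ← hsort,
    ← List.sum_range_getD, length_sort]

theorem partNth_ofBeta (T : Finset ℕ) {i : ℕ} (hi : i < T.card) :
    partNth (ofBeta T) i = betaPart T i := by
  have hpairwise : ((List.range T.card).map (betaPart T)).Pairwise (· ≥ ·) := by
    rw [List.pairwise_map]
    exact List.pairwise_lt_range.imp fun h => betaPart_antitone T h.le
  have hsort :
      (ofBeta T).sort (· ≥ ·) = ((List.range T.card).map (betaPart T)).filter (0 < ·) :=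
    List.Perm.eq_of_pairwise' (Multiset.pairwise_sort _ _) (hpairwise.filter _)
      (by rw [← Multiset.coe_eq_coe, Multiset.sort_eq, ofBeta])
  rw [partNth, hsort, List.getD_filter_pos_of_pairwise_ge hpairwise,
    List.getD_eq_getElem _ _ (by simpa using hi)]
  simp

theorem beta_ofBeta (T : Finset ℕ) : beta (ofBeta T) T.card = T := by
  have hlen : (T.sort (· ≥ ·)).length = T.card := length_sort _
  ext b
  rw [mem_beta, ← mem_sort (· ≥ ·)]
  constructor
  · rintro ⟨i, hi, rfl⟩
    rw [partNth_ofBeta T hi, betaPart_add hi, List.getD_eq_getElem _ _ (hlen ▸ hi)]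
    exact List.getElem_mem _
  · intro hb
    obtain ⟨i, hi, rfl⟩ := List.getElem_of_mem hb
    refine ⟨i, hlen ▸ hi, ?_⟩
    rw [partNth_ofBeta T (hlen ▸ hi), betaPart_add (hlen ▸ hi), List.getD_eq_getElem _ _ hi]

namespace Abacus

variable (k : ℕ)

def movable (B : Finset ℕ) : Finset ℕ := B.filter fun s => k ≤ s ∧ s - k ∉ B

def movableOn (B : Finset ℕ) (r : ℕ) : Finset ℕ := (movable k B).filter (· % k = r)

def flushRunners (B : Finset ℕ) : Finset ℕ :=
  (range k).filter fun r => ∃ s ∈ movableOn k B r, ∀ x < s - k, x % k = r → x ∈ B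

def activeRunners (B : Finset ℕ) : Finset ℕ :=
  (range k).filter fun r => (movableOn k B r).Nonempty

def moveRunner (B : Finset ℕ) : ℕ :=
  if h : (flushRunners k B).Nonempty then (flushRunners k B).min' h
  else if h' : (activeRunners k B).Nonempty then (activeRunners k B).min' h' else 0

def movedBead (B : Finset ℕ) : ℕ :=
  if h : (movableOn k B (moveRunner k B)).Nonempty then (movableOn k B (moveRunner k B)).min' h
  else 0

def moveLabel (B : Finset ℕ) : ℕ := if (flushRunners k B).Nonempty then moveRunner k B else k

def slide (B : Finset ℕ) : Finset ℕ := insert (movedBead k B - k) (B.erase (movedBead k B))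

variable {k}

theorem mem_movableOn {B : Finset ℕ} {r s : ℕ} :
    s ∈ movableOn k B r ↔ s ∈ B ∧ k ≤ s ∧ s - k ∉ B ∧ s % k = r := by
  simp only [movableOn, movable, mem_filter, and_assoc]

theorem exists_mem_movable_of_notMem (hk : 0 < k) {B : Finset ℕ} :
    ∀ {g : ℕ} (m : ℕ), g ∉ B → g + m * k ∈ B →
      ∃ t ∈ movable k B, t % k = g % k ∧ g < t ∧ t ≤ g + m * k
  | g, 0, hg, hmem => absurd (by simpa using hmem) hg
  | g, m + 1, hg, hmem => by
    by_cases hgk : g + k ∈ B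
    · exact ⟨g + k, mem_filter.mpr ⟨hgk, by omega, by simpa using hg⟩, by simp, by omega,
        by rw [add_mul]; omega⟩
    · obtain ⟨t, ht, htmod, hgt, hle⟩ :=
        exists_mem_movable_of_notMem hk m hgk (by rwa [add_assoc, add_comm k, ← Nat.succ_mul])
      exact ⟨t, ht, by simpa using htmod, by omega, by rw [add_mul]; omega⟩

theorem movedBead_le {B : Finset ℕ} {s : ℕ} (hs : s ∈ movableOn k B (moveRunner k B)) :
    movedBead k B ≤ s := by
  rw [movedBead, dif_pos ⟨s, hs⟩]
  exact min'_le _ _ hs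

theorem mem_slide {B : Finset ℕ} {t : ℕ} :
    t ∈ slide k B ↔ t = movedBead k B - k ∨ t ∈ B ∧ t ≠ movedBead k B := by
  rw [slide, mem_insert, mem_erase, and_comm]

section

variable (hk : 0 < k) {B : Finset ℕ} (hM : (movable k B).Nonempty)
include hk hM

theorem activeRunners_nonempty : (activeRunners k B).Nonempty := by
  obtain ⟨s, hs⟩ := hM
  exact ⟨s % k, mem_filter.mpr ⟨mem_range.mpr (Nat.mod_lt _ hk), s,
    mem_filter.mpr ⟨hs, rfl⟩⟩⟩

theorem moveRunner_mem_activeRunners : moveRunner k B ∈ activeRunners k B := by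
  rw [moveRunner]
  split_ifs with hG hA
  · obtain ⟨hr, s, hs, -⟩ := mem_filter.mp ((flushRunners k B).min'_mem hG)
    exact mem_filter.mpr ⟨hr, s, hs⟩
  · exact min'_mem _ _
  · exact absurd (activeRunners_nonempty hk hM) hA

theorem moveRunner_lt : moveRunner k B < k :=
  mem_range.mp (mem_filter.mp (moveRunner_mem_activeRunners hk hM)).1

theorem movedBead_mem_movableOn : movedBead k B ∈ movableOn k B (moveRunner k B) := by
  have hne := (mem_filter.mp (moveRunner_mem_activeRunners hk hM)).2
  rw [movedBead, dif_pos hne]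
  exact min'_mem _ _

theorem movedBead_mem : movedBead k B ∈ B :=
  (mem_movableOn.mp (movedBead_mem_movableOn hk hM)).1

theorem le_movedBead : k ≤ movedBead k B :=
  (mem_movableOn.mp (movedBead_mem_movableOn hk hM)).2.1

theorem movedBead_sub_notMem : movedBead k B - k ∉ B :=
  (mem_movableOn.mp (movedBead_mem_movableOn hk hM)).2.2.1

theorem movedBead_mod : movedBead k B % k = moveRunner k B :=
  (mem_movableOn.mp (movedBead_mem_movableOn hk hM)).2.2.2

theorem movedBead_sub_mod : (movedBead k B - k) % k = moveRunner k B := by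
  rw [← Nat.mod_eq_sub_mod (le_movedBead hk hM), movedBead_mod hk hM]

theorem eq_insert_erase_slide :
    B = insert (movedBead k B) ((slide k B).erase (movedBead k B - k)) := by
  rw [slide, erase_insert fun h => movedBead_sub_notMem hk hM (mem_of_mem_erase h),
    insert_erase (movedBead_mem hk hM)]

theorem card_slide : (slide k B).card = B.card := by
  rw [slide, card_insert_of_notMem fun h => movedBead_sub_notMem hk hM (mem_of_mem_erase h),
    card_erase_add_one (movedBead_mem hk hM)]

theorem sum_slide_add : (slide k B).sum id + k = B.sum id := by
  rw [slide, sum_insert fun h => movedBead_sub_notMem hk hM (mem_of_mem_erase h),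
    ← sum_erase_add B id (movedBead_mem hk hM)]
  have := le_movedBead hk hM
  simp only [id]
  omega

theorem mem_slide_iff_of_mod_ne {t : ℕ} (ht : t % k ≠ moveRunner k B) :
    t ∈ slide k B ↔ t ∈ B := by
  have := movedBead_mod hk hM
  have := movedBead_sub_mod hk hM
  rw [mem_slide]
  constructor
  · rintro (rfl | ⟨h, -⟩)
    · exact absurd this ht
    · exact h
  · exact fun h => Or.inr ⟨h, by rintro rfl; exact ht ‹_›⟩

theorem forall_mem_of_flush (hG : (flushRunners k B).Nonempty) :
    ∀ x < movedBead k B - k, x % k = moveRunner k B → x ∈ B := by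
  have hr : moveRunner k B ∈ flushRunners k B := by
    rw [moveRunner, dif_pos hG]
    exact min'_mem _ _
  obtain ⟨-, s, hs, hflush⟩ := mem_filter.mp hr
  obtain rfl : s = movedBead k B := by
    refine (le_antisymm (movedBead_le hs) ?_).symm
    by_contra! hlt
    have := le_movedBead hk hM
    exact movedBead_sub_notMem hk hM
      (hflush _ (by omega) (movedBead_sub_mod hk hM))
  exact hflush

theorem isGreatest_slide_of_flush (hG : (flushRunners k B).Nonempty) :
    IsGreatest {t | t ∈ slide k B ∧ t % k = moveRunner k B ∧
      ∀ x ≤ t, x % k = moveRunner k B → x ∈ slide k B} (movedBead k B - k) := by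
  have hks := le_movedBead hk hM
  refine ⟨⟨mem_slide.mpr (Or.inl rfl), movedBead_sub_mod hk hM, fun x hx hxr => ?_⟩, ?_⟩
  · rcases hx.lt_or_eq with hx | rfl
    · exact mem_slide.mpr (Or.inr ⟨forall_mem_of_flush hk hM hG x hx hxr, by omega⟩)
    · exact mem_slide.mpr (Or.inl rfl)
  · rintro t ⟨-, htr, hclosed⟩
    by_contra! hlt
    have := Nat.ModEq.add_le_of_lt (by rw [Nat.ModEq, htr, movedBead_sub_mod hk hM]) hlt
    rcases mem_slide.mp (hclosed _ (by omega) (movedBead_mod hk hM)) with h | h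
    · omega
    · exact h.2 rfl

theorem sub_sub_notMem_of_not_flush (hG : ¬ (flushRunners k B).Nonempty) :
    k ≤ movedBead k B - k ∧ movedBead k B - k - k ∉ B := by
  have hnflush : moveRunner k B ∉ flushRunners k B := fun h => hG ⟨_, h⟩
  simp only [flushRunners, mem_filter, mem_range, moveRunner_lt hk hM, true_and, not_exists,
    not_and, not_forall] at hnflush
  obtain ⟨x, hxs, hxr, hxB⟩ := hnflush _ (movedBead_mem_movableOn hk hM)
  have hsr := movedBead_mod hk hM
  have := Nat.ModEq.add_le_of_lt (by rw [Nat.ModEq, hxr, movedBead_sub_mod hk hM]) hxs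
  refine ⟨by omega, fun hmem => ?_⟩
  obtain ⟨m, hm⟩ : k ∣ movedBead k B - k - k - x :=
    Nat.dvd_of_mod_eq_zero (Nat.sub_mod_eq_zero_of_mod_eq (by
      rw [← Nat.mod_eq_sub_mod (by omega), ← Nat.mod_eq_sub_mod (by omega), hsr, hxr]))
  obtain ⟨t, ht, htr, -, hle⟩ := exists_mem_movable_of_notMem hk m hxB
    (by rwa [mul_comm, ← hm, Nat.add_sub_cancel' (by omega)])
  have := movedBead_le (mem_filter.mpr ⟨ht, htr.trans hxr⟩)
  rw [mul_comm, ← hm] at hle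
  omega

theorem isLeast_movableOn_slide_of_not_flush (hG : ¬ (flushRunners k B).Nonempty) :
    IsLeast (movableOn k (slide k B) (moveRunner k B) : Set ℕ) (movedBead k B - k) := by
  obtain ⟨hk2, hgap⟩ := sub_sub_notMem_of_not_flush hk hM hG
  refine ⟨mem_movableOn.mpr ⟨mem_slide.mpr (Or.inl rfl), hk2, ?_, movedBead_sub_mod hk hM⟩,
    ?_⟩
  · rw [mem_slide]
    rintro (h | ⟨h, -⟩)
    · omega
    · exact hgap h
  · intro t ht
    obtain ⟨htT, htk, htgap, htr⟩ := mem_movableOn.mp ht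
    by_contra! hlt
    obtain ⟨htB, -⟩ := (mem_slide.mp htT).resolve_left hlt.ne
    have htgapB : t - k ∉ B := fun h => htgap (mem_slide.mpr (Or.inr ⟨h, by omega⟩))
    have := movedBead_le (mem_movableOn.mpr ⟨htB, htk, htgapB, htr⟩)
    omega

theorem movableOn_slide_of_ne {r : ℕ} (hr : r ≠ moveRunner k B) :
    movableOn k (slide k B) r = movableOn k B r := by
  ext t
  simp only [mem_movableOn]
  by_cases htr : t % k = r
  swap
  · simp [htr]
  by_cases htk : k ≤ t
  swap
  · simp [htk]
  rw [mem_slide_iff_of_mod_ne hk hM (htr ▸ hr),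
    mem_slide_iff_of_mod_ne hk hM (by rwa [← Nat.mod_eq_sub_mod htk, htr])]

theorem activeRunners_slide_of_not_flush (hG : ¬ (flushRunners k B).Nonempty) :
    activeRunners k (slide k B) = activeRunners k B := by
  ext r
  simp only [activeRunners, mem_filter]
  by_cases hr : r = moveRunner k B
  · subst hr
    exact and_congr_right fun _ => iff_of_true
      ⟨_, (isLeast_movableOn_slide_of_not_flush hk hM hG).1⟩
      ⟨_, movedBead_mem_movableOn hk hM⟩
  · rw [movableOn_slide_of_ne hk hM hr]

theorem isLeast_moveRunner_of_not_flush (hG : ¬ (flushRunners k B).Nonempty) :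
    IsLeast (activeRunners k B : Set ℕ) (moveRunner k B) := by
  rw [moveRunner, dif_neg hG, dif_pos (activeRunners_nonempty hk hM)]
  exact isLeast_min' _ _

theorem moveLabel_lt_succ : moveLabel k B < k + 1 := by
  have := moveRunner_lt hk hM
  unfold moveLabel
  split_ifs <;> omega

end

theorem eq_of_slide_eq (hk : 0 < k) {B B' : Finset ℕ} (hM : (movable k B).Nonempty)
    (hM' : (movable k B').Nonempty) (hL : moveLabel k B = moveLabel k B')
    (hT : slide k B = slide k B') : B = B' := by
  suffices h : movedBead k B - k = movedBead k B' - k by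
    have := le_movedBead hk hM
    have := le_movedBead hk hM'
    rw [eq_insert_erase_slide hk hM, eq_insert_erase_slide hk hM', hT, h,
      show movedBead k B = movedBead k B' by omega]
  by_cases hG : (flushRunners k B).Nonempty <;> by_cases hG' : (flushRunners k B').Nonempty
  · have hr : moveRunner k B = moveRunner k B' := by simpa [moveLabel, hG, hG'] using hL
    exact (isGreatest_slide_of_flush hk hM hG).unique
      (by rw [hr, hT]; exact isGreatest_slide_of_flush hk hM' hG')
  · simp only [moveLabel, hG, hG', if_true, if_false] at hL
    exact absurd hL (moveRunner_lt hk hM).ne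
  · simp only [moveLabel, hG, hG', if_true, if_false] at hL
    exact absurd hL.symm (moveRunner_lt hk hM').ne
  · have hr : moveRunner k B = moveRunner k B' :=
      (isLeast_moveRunner_of_not_flush hk hM hG).unique (by
        rw [← activeRunners_slide_of_not_flush hk hM hG, hT,
          activeRunners_slide_of_not_flush hk hM' hG']
        exact isLeast_moveRunner_of_not_flush hk hM' hG')
    exact (isLeast_movableOn_slide_of_not_flush hk hM hG).unique
      (by rw [hr, hT]; exact isLeast_movableOn_slide_of_not_flush hk hM' hG')

end Abacus

open Abacus

theorem add_sub_card_filter_notMem_beta (μ : Multiset ℕ) (N j : ℕ) :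
    N + j - (μ.filter (j < ·)).card ∉ beta μ N := by
  rw [mem_beta]
  rintro ⟨i, hi, he⟩
  have hfilter : (μ.filter (j < ·)).card ≤ μ.card := Multiset.card_le_card (μ.filter_le _)
  have := lt_partNth_iff μ i j
  by_cases hij : j < partNth μ i <;> omega

/-- The hook at `(i, j)` is the distance from the bead of row `i` down to the gap of
column `j`, so a hook of length divisible by `k` is a bead above a gap on the same runner. -/
theorem movable_beta_nonempty_of_not_isCore {k n : ℕ} (hk : 0 < k) {α : Nat.Partition n}
    (h : ¬ IsCore k α) : (movable k (beta α.parts n)).Nonempty := by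
  simp only [IsCore, not_forall, not_not] at h
  obtain ⟨i, j, hij, m, hm⟩ := h
  have hi := (lt_partNth_iff _ i j).mp hij
  have hcard := α.card_parts_le
  have hfilter := Multiset.card_le_card (α.parts.filter_le (j < ·))
  have hbead : partNth α.parts i + (n - 1 - i) ∈ beta α.parts n :=
    mem_beta.mpr ⟨i, by omega, rfl⟩
  have hhook :
      n + j - (α.parts.filter (j < ·)).card + m * k = partNth α.parts i + (n - 1 - i) := by
    rw [hookLen] at hm
    rw [mul_comm, ← hm]
    omega
  obtain ⟨t, ht, -⟩ := exists_mem_movable_of_notMem hk m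
    (add_sub_card_filter_notMem_beta α.parts n j) (hhook ▸ hbead)
  exact ⟨t, ht⟩

theorem sum_ofBeta_slide_beta {k n : ℕ} (hk : 0 < k) {α : Nat.Partition n}
    (hM : (movable k (beta α.parts n)).Nonempty) :
    (ofBeta (slide k (beta α.parts n))).sum = n - k := by
  have := sum_ofBeta_add (slide k (beta α.parts n))
  have := sum_slide_add hk hM
  rw [card_slide hk hM, card_beta] at *
  rw [sum_beta α.card_parts_le, α.parts_sum] at *
  omega

noncomputable def slideNonCore {k n : ℕ} (hk : 0 < k)
    (α : {α : Nat.Partition n // ¬ IsCore k α}) :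
    Fin (k + 1) × Nat.Partition (n - k) :=
  have hM := movable_beta_nonempty_of_not_isCore hk α.2
  (⟨moveLabel k (beta α.1.parts n), moveLabel_lt_succ hk hM⟩,
    ⟨ofBeta (slide k (beta α.1.parts n)), pos_of_mem_ofBeta, sum_ofBeta_slide_beta hk hM⟩)

theorem slideNonCore_injective {k n : ℕ} (hk : 0 < k) :
    Function.Injective (slideNonCore (n := n) hk) := by
  rintro ⟨α, hα⟩ ⟨α', hα'⟩ he
  have hM := movable_beta_nonempty_of_not_isCore hk hα
  have hM' := movable_beta_nonempty_of_not_isCore hk hα'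
  have hL : moveLabel k (beta α.parts n) = moveLabel k (beta α'.parts n) :=
    congrArg (fun p => (p.1 : ℕ)) he
  have hT : slide k (beta α.parts n) = slide k (beta α'.parts n) := by
    rw [← beta_ofBeta (slide k _), ← beta_ofBeta (slide k (beta α'.parts n)), card_slide hk hM,
      card_slide hk hM', card_beta, card_beta]
    exact congrArg (fun p => beta p.2.parts n) he
  exact Subtype.ext <| Nat.Partition.ext <|
    eq_of_beta_eq (fun _ => α.parts_pos) (fun _ => α'.parts_pos) α.card_parts_le
      α'.card_parts_le (eq_of_slide_eq hk hM hM' hL hT)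

theorem card_not_isCore_le {k n : ℕ} (hk : 0 < k) :
    Nat.card {α : Nat.Partition n // ¬ IsCore k α} ≤ (k + 1) * pfun (n - k) := by
  simpa [pfun, Nat.card_prod] using Nat.card_le_card_of_injective _ (slideNonCore_injective hk)

theorem pfun_eq_ck_add_card_not_isCore (k n : ℕ) :
    pfun n = ck k n + Nat.card {α : Nat.Partition n // ¬ IsCore k α} := by
  classical
  simp only [pfun, ck, Nat.card_eq_fintype_card, Fintype.card_subtype_compl]
  have := Fintype.card_subtype_le fun α : Nat.Partition n => IsCore k α
  omega

theorem non_core_bound_general (k n : ℕ) (hk : 1 ≤ k) :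
    pfun n - ck k n ≤ (k + 1) * pfun (n - k) := by
  rw [pfun_eq_ck_add_card_not_isCore k n]
  have := card_not_isCore_le (n := n) hk
  omega

theorem non_core_bound (k n : ℕ) (hk : 1 ≤ k) (hkn : k ≤ n) :
    pfun n - ck k n ≤ (k + 1) * pfun (n - k) :=
  non_core_bound_general k n hk
end

section
/- Let p be a prime, n ≥ 1, and let λ = (a₁^{b₁}, ..., a_h^{b_h}) be a partition of n into parts not divisible by p, written with multiplicities b_j for the distinct parts a_j. For each j write the p-adic expansion b_j = Σ_t f_{j,t} p^t with 0 ≤ f_{j,t} < p, and define the partition λ̄ obtained by replacing, for each j and t, the f_{j,t}·p^t copies of a_j by f_{j,t} parts each equal to a_j·p^t. Then λ̄ is a partition of n and (λ̄)* = λ, where μ* is obtained from μ by replacing each part p^k·a (p ∤ a) by p^k copies of a. -/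
/-- `μ*`: replace each part `p^k·a` (with `p ∤ a`) of `μ` by `p^k` copies of `a`. -/
def star (p : ℕ) (μ : Multiset ℕ) : Multiset ℕ :=
  μ.bind (fun x => Multiset.replicate (p ^ x.factorization p) (x / p ^ x.factorization p))

/-- The partition `λ̄` obtained from `λ = (a₁^{b₁}, …, a_h^{b_h})`: for each distinct part `a`
with multiplicity `b = Σ_t f_t p^t` (`p`-adic digits `f_t`), take `f_t` parts equal to `a·p^t`. -/
def lamBar (p : ℕ) (μ : Multiset ℕ) : Multiset ℕ :=
  μ.toFinset.val.bind (fun a =>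
    (Finset.range (μ.count a + 1)).val.bind (fun t =>
      Multiset.replicate (μ.count a / p ^ t % p) (a * p ^ t)))

/-!
If a part `a` of `λ` with `p ∤ a` has multiplicity `b = Σ_t f_t p^t`, then `λ̄` contains `f_t`
parts `a·p^t`, and `*` turns each of them back into `p^t` copies of `a`: in total `b` copies
of `a`. So `(λ̄)* = λ`, and since `*` preserves the sum of the parts, `λ̄` is a partition of
`n`.
-/

open Multiset

theorem Nat.sum_range_div_pow_mod_mul_pow (p b m : ℕ) :
    ∑ t ∈ Finset.range m, b / p ^ t % p * p ^ t = b % p ^ m := by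
  induction m with
  | zero => simp [Nat.mod_one]
  | succ m ih => rw [Finset.sum_range_succ, ih, Nat.mod_pow_succ, mul_comm]

theorem Nat.sum_range_succ_div_pow_mod_mul_pow {p : ℕ} (hp : 1 < p) (b : ℕ) :
    ∑ t ∈ Finset.range (b + 1), b / p ^ t % p * p ^ t = b := by
  rw [Nat.sum_range_div_pow_mod_mul_pow,
    Nat.mod_eq_of_lt ((Nat.lt_succ_self b).trans (Nat.lt_pow_self hp))]

theorem Nat.factorization_mul_pow_of_not_dvd {p a : ℕ} (hp : p.Prime) (ha : ¬p ∣ a) (t : ℕ) :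
    (a * p ^ t).factorization p = t := by
  have ha0 : a ≠ 0 := by rintro rfl; exact ha (dvd_zero p)
  simp [Nat.factorization_mul ha0 (pow_ne_zero t hp.ne_zero), hp.factorization_self,
    Nat.factorization_eq_zero_of_not_dvd ha]

theorem Multiset.bind_replicate_eq_replicate_sum {ι α : Type*} (s : Multiset ι) (f : ι → ℕ)
    (a : α) :
    (s.bind fun i => replicate (f i) a) = replicate (s.map f).sum a := by
  induction s using Multiset.induction_on with
  | empty => simp
  | cons i s ih => rw [cons_bind, ih, map_cons, sum_cons, replicate_add]

theorem Multiset.toFinset_bind_replicate_count {α : Type*} [DecidableEq α] (s : Multiset α) :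
    (s.toFinset.val.bind fun a => replicate (s.count a) a) = s := by
  rw [Multiset.bind, join, ← Finset.sum_eq_multiset_sum]
  simpa only [← nsmul_singleton] using s.toFinset_sum_count_nsmul_eq

theorem star_bind {α : Type*} (p : ℕ) (s : Multiset α) (f : α → Multiset ℕ) :
    star p (s.bind f) = s.bind fun a => star p (f a) :=
  bind_assoc

theorem star_replicate_mul_pow {p a : ℕ} (hp : p.Prime) (ha : ¬p ∣ a) (k t : ℕ) :
    star p (replicate k (a * p ^ t)) = replicate (k * p ^ t) a := by
  rw [star.eq_1, Multiset.bind, map_replicate, join, sum_replicate, nsmul_replicate,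
    Nat.factorization_mul_pow_of_not_dvd hp ha, Nat.mul_div_cancel _ (pow_pos hp.pos t)]

theorem sum_star (p : ℕ) (μ : Multiset ℕ) : (star p μ).sum = μ.sum := by
  induction μ using Multiset.induction_on with
  | empty => rfl
  | cons x μ ih =>
    rw [star.eq_1, cons_bind, sum_add, ← star.eq_1, ih, sum_replicate, smul_eq_mul,
      Nat.mul_div_cancel' (Nat.ordProj_dvd x p), sum_cons]

theorem star_lamBar {p : ℕ} (hp : p.Prime) {μ : Multiset ℕ} (hμ : ∀ x ∈ μ, ¬p ∣ x) :
    star p (lamBar p μ) = μ := by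
  conv_rhs => rw [← μ.toFinset_bind_replicate_count]
  rw [lamBar, star_bind]
  refine bind_congr fun a ha => ?_
  simp only [star_bind, star_replicate_mul_pow hp (hμ a (mem_toFinset.1 ha)),
    bind_replicate_eq_replicate_sum, ← Finset.sum_eq_multiset_sum,
    Nat.sum_range_succ_div_pow_mod_mul_pow hp.one_lt]

theorem pos_of_mem_lamBar {p : ℕ} (hp : 0 < p) {μ : Multiset ℕ} (hμ : ∀ x ∈ μ, 0 < x)
    {x : ℕ} (hx : x ∈ lamBar p μ) : 0 < x := by
  simp only [lamBar, mem_bind, Finset.mem_val, mem_toFinset] at hx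
  obtain ⟨a, ha, t, -, hx⟩ := hx
  rw [eq_of_mem_replicate hx]
  exact Nat.mul_pos (hμ a ha) (pow_pos hp t)

theorem lamBar_is_partition_and_star_general (p n : ℕ) (hp : p.Prime)
    (lam : Nat.Partition n) (hlam : ∀ x ∈ lam.parts, ¬ p ∣ x) :
    (lamBar p lam.parts).sum = n ∧ (∀ x ∈ lamBar p lam.parts, 0 < x) ∧
      star p (lamBar p lam.parts) = lam.parts := by
  have hstar := star_lamBar hp hlam
  refine ⟨?_, fun x => pos_of_mem_lamBar hp.pos fun _ => lam.parts_pos, hstar⟩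
  rw [← sum_star p, hstar, lam.parts_sum]

theorem lamBar_is_partition_and_star (p n : ℕ) (hp : p.Prime) (hn : 1 ≤ n)
    (lam : Nat.Partition n) (hlam : ∀ x ∈ lam.parts, ¬ p ∣ x) :
    (lamBar p lam.parts).sum = n ∧ (∀ x ∈ lamBar p lam.parts, 0 < x) ∧
      star p (lamBar p lam.parts) = lam.parts :=
  lamBar_is_partition_and_star_general p n hp lam hlam
end

section
/- Let p be a prime, c > 0, and λ = (a₁^{b₁}, ..., a_h^{b_h}) a partition of n into parts not divisible by p with h distinct parts. If h ≤ √n/(c·p·log n), then there exist indices i and s ≥ 0 with p^s ≤ b_i and a_i·p^s ≥ c·√n·log(n). -/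
/-!
Pigeonhole: the `h` distinct parts contribute `n = ∑ aᵢ bᵢ` in total, so some `aᵢ bᵢ ≥ n / h`.
For the largest `s` with `p ^ s ≤ bᵢ` we have `bᵢ < p ^ (s + 1)`, hence
`aᵢ p ^ s > aᵢ bᵢ / p ≥ n / (h p) ≥ c √n log n`.
-/

theorem Multiset.exists_mem_sum_le_card_toFinset_mul_count_mul {s : Multiset ℕ} (hs : s ≠ 0) :
    ∃ a ∈ s, s.sum ≤ s.toFinset.card * (s.count a * a) := by
  have hsum : s.sum = ∑ a ∈ s.toFinset, s.count a * a := Finset.sum_multiset_count s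
  obtain ⟨a, ha, hle⟩ := Finset.exists_le_of_sum_le (Multiset.toFinset_nonempty.2 hs)
    (f := fun _ => s.sum) (g := fun a => s.toFinset.card * (s.count a * a))
    (by rw [Finset.sum_const, ← Finset.mul_sum, ← hsum, smul_eq_mul])
  exact ⟨a, Multiset.mem_toFinset.1 ha, hle⟩

theorem Nat.mul_le_mul_pow_log {p : ℕ} (hp : 1 < p) (b a : ℕ) :
    b * a ≤ p * (a * p ^ Nat.log p b) := by
  calc b * a ≤ p ^ (Nat.log p b + 1) * a :=
        Nat.mul_le_mul_right a (Nat.lt_pow_succ_log_self hp b).le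
    _ = p * (a * p ^ Nat.log p b) := by ring

theorem Real.mul_sqrt_le_of_le_mul_of_le_sqrt_div {n h q x : ℝ} (hx : 0 ≤ x) (hnx : n ≤ h * x)
    (hh : h ≤ √n / q) : q * √n ≤ x := by
  rcases le_or_gt q 0 with hq | hq
  · nlinarith [Real.sqrt_nonneg n]
  rcases le_or_gt n 0 with hn | hn
  · simpa [Real.sqrt_eq_zero'.2 hn] using hx
  have hqh : q * h ≤ √n := by rwa [le_div_iff₀' hq] at hh
  have hsqrt : 0 < √n := Real.sqrt_pos.2 hn
  refine le_of_mul_le_mul_left ?_ hsqrt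
  calc √n * (q * √n) = q * n := by rw [mul_left_comm, Real.mul_self_sqrt hn.le]
    _ ≤ q * (h * x) := mul_le_mul_of_nonneg_left hnx hq.le
    _ = (q * h) * x := by ring
    _ ≤ √n * x := mul_le_mul_of_nonneg_right hqh hx

theorem pigeonhole_large_part_general (p n : ℕ) (hp : p.Prime) (hn : 1 ≤ n) (c : ℝ)
    (lam : Nat.Partition n)
    (hh : (lam.parts.toFinset.card : ℝ) ≤ Real.sqrt n / (c * p * Real.log n)) :
    ∃ a ∈ lam.parts, ∃ s : ℕ,
      p ^ s ≤ lam.parts.count a ∧ c * Real.sqrt n * Real.log n ≤ (a * p ^ s : ℕ) := by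
  have hne : lam.parts ≠ 0 := fun h => by simpa [h] using (lam.parts_sum.trans_ge hn)
  obtain ⟨a, ha, hpig⟩ := Multiset.exists_mem_sum_le_card_toFinset_mul_count_mul hne
  set s := Nat.log p (lam.parts.count a)
  refine ⟨a, ha, s, Nat.pow_log_le_self p (Multiset.count_ne_zero.2 ha), ?_⟩
  have hbound : n ≤ lam.parts.toFinset.card * (p * (a * p ^ s)) := by
    calc n = lam.parts.sum := lam.parts_sum.symm
      _ ≤ _ := hpig.trans (Nat.mul_le_mul_left _ (Nat.mul_le_mul_pow_log hp.one_lt _ a))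
  have hp0 : (0 : ℝ) < p := by exact_mod_cast hp.pos
  have key := Real.mul_sqrt_le_of_le_mul_of_le_sqrt_div (x := p * (a * p ^ s)) (by positivity)
    (by exact_mod_cast hbound) hh
  refine le_of_mul_le_mul_left ?_ hp0
  push_cast at key ⊢
  linarith

theorem pigeonhole_large_part (p n : ℕ) (hp : p.Prime) (hn : 1 ≤ n) (c : ℝ) (hc : 0 < c)
    (lam : Nat.Partition n) (hlam : ∀ x ∈ lam.parts, ¬ p ∣ x)
    (hh : (lam.parts.toFinset.card : ℝ) ≤ Real.sqrt n / (c * p * Real.log n)) :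
    ∃ a ∈ lam.parts, ∃ s : ℕ,
      p ^ s ≤ lam.parts.count a ∧ c * Real.sqrt n * Real.log n ≤ (a * p ^ s : ℕ) :=
  pigeonhole_large_part_general p n hp hn c lam hh
end

section
/- For every partition λ of n − 1, let h be the largest index with |λ^h| > 0 in a k-multipartition λ = (λ¹,...,λᵏ) (h = 0 if all components are empty). Define A(λ) to be the set of k-multipartitions of n obtained from λ by adding a node to λ^h at the end of its last row or at the bottom of its first column, or by adding a single node to some λ^i with i > h. Then |A(λ)| ≤ k+1, and every k-multipartition of n lies in A(λ) for some k-multipartition λ of n−1. -/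
/-!
Adding a node at the end of the last row of a nonempty partition is a single well-defined move,
since all smallest parts are equal; so `A(λ)` consists of the column addition at the last nonempty
component `h`, the row addition at `h`, and one singleton for each `i > h`: at most `k + 1`
elements. Conversely, a nonempty partition arises by such a move from the partition obtained by
removing a part `1` if it has one, and otherwise by shrinking a smallest part. Applied to the last
nonempty component of a multipartition this gives the covering; when that component is `(1)`,
removing it leaves an earlier last component (or none), and the node is added as a singleton.
-/

/-- `f : Fin k → Multiset ℕ` is a `k`-multipartition of `m`: all parts are positive and the
total size is `m`. -/
def IsMP (k : ℕ) (f : Fin k → Multiset ℕ) (m : ℕ) : Prop :=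
  (∀ i, ∀ x ∈ f i, 0 < x) ∧ (∑ i, (f i).sum) = m

/-- `μ` is obtained from the partition `ν` by adding one node, either at the end of the last
row (increasing a smallest part by one) or at the bottom of the first column (adding a part
equal to `1`). -/
def AddEndNode (ν μ : Multiset ℕ) : Prop :=
  μ = 1 ::ₘ ν ∨ (∃ a ∈ ν, (∀ b ∈ ν, a ≤ b) ∧ μ = (a + 1) ::ₘ ν.erase a)

/-- The set `A(f)` of multipartitions obtained from `f` by adding a node to the last nonempty
component `f h` at the end of its last row or at the bottom of its first column, or by adding a
single node (necessarily forming the partition `(1)`) to a component after the last nonempty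
one. -/
def ASet (k : ℕ) (f : Fin k → Multiset ℕ) : Set (Fin k → Multiset ℕ) :=
  { g |
    (∃ hi : Fin k, f hi ≠ 0 ∧ (∀ j, hi < j → f j = 0) ∧
      (((∀ j, j ≠ hi → g j = f j) ∧ AddEndNode (f hi) (g hi)) ∨
        (∃ i, hi < i ∧ (∀ j, j ≠ i → g j = f j) ∧ g i = {1}))) ∨
    ((∀ j, f j = 0) ∧ ∃ i, (∀ j, j ≠ i → g j = f j) ∧ g i = {1}) }

open Function

lemma exists_last_ne_zero {ι M : Type*} [LinearOrder ι] [Finite ι] [Zero M] {f : ι → M}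
    (h : ∃ i, f i ≠ 0) : ∃ i, f i ≠ 0 ∧ ∀ j, i < j → f j = 0 := by
  obtain ⟨i, hi, hmax⟩ := Set.exists_max_image (support f) id (Set.toFinite _) h
  exact ⟨i, hi, fun j hij => by_contra fun hj => (hmax j hj).not_gt hij⟩

lemma le_of_forall_lt_eq_zero {ι M : Type*} [LinearOrder ι] [Zero M] {f : ι → M} {i j : ι}
    (hj : f j ≠ 0) (hi : ∀ l, i < l → f l = 0) : j ≤ i :=
  not_lt.1 fun h => hj (hi j h)

lemma Multiset.exists_min_of_ne_zero {α : Type*} [LinearOrder α] {ν : Multiset α} (hν : ν ≠ 0) :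
    ∃ a ∈ ν, ∀ b ∈ ν, a ≤ b := by
  simpa using ν.toFinset.exists_min_image id (by simpa using hν)

namespace AddEndNode

lemma eq_or_eq_of_min {ν μ : Multiset ℕ} (h : AddEndNode ν μ) {a : ℕ} (ha : a ∈ ν)
    (hmin : ∀ b ∈ ν, a ≤ b) : μ = 1 ::ₘ ν ∨ μ = (a + 1) ::ₘ ν.erase a := by
  obtain h | ⟨a', ha', hmin', rfl⟩ := h
  · exact .inl h
  · rw [le_antisymm (hmin' a ha) (hmin a' ha')]
    exact .inr rfl

lemma eq_singleton_one_of_zero {μ : Multiset ℕ} (h : AddEndNode 0 μ) : μ = {1} := by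
  simpa [AddEndNode] using h

-- Remove a part `1` if there is one, and otherwise shrink a smallest part.
lemma exists_of_ne_zero {μ : Multiset ℕ} (hμ : μ ≠ 0) (hpos : ∀ x ∈ μ, 0 < x) :
    ∃ ν, (∀ x ∈ ν, 0 < x) ∧ ν.sum + 1 = μ.sum ∧ AddEndNode ν μ := by
  by_cases h1 : 1 ∈ μ
  · refine ⟨μ.erase 1, fun x hx => hpos x (Multiset.mem_of_mem_erase hx), ?_, .inl ?_⟩
    · rw [← Multiset.sum_erase h1, add_comm]
    · exact (Multiset.cons_erase h1).symm
  obtain ⟨b, hb, hmin⟩ := Multiset.exists_min_of_ne_zero hμ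
  have hb2 : 2 ≤ b := by
    have := hpos b hb
    have : b ≠ 1 := fun h => h1 (h ▸ hb)
    omega
  refine ⟨(b - 1) ::ₘ μ.erase b, ?_, ?_, .inr ⟨b - 1, Multiset.mem_cons_self _ _, ?_, ?_⟩⟩
  · intro x hx
    obtain rfl | hx := Multiset.mem_cons.1 hx
    · omega
    · exact hpos x (Multiset.mem_of_mem_erase hx)
  · rw [Multiset.sum_cons, ← Multiset.sum_erase hb]
    omega
  · intro c hc
    obtain rfl | hc := Multiset.mem_cons.1 hc
    · exact le_rfl
    · have := hmin c (Multiset.mem_of_mem_erase hc)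
      omega
  · rw [Multiset.erase_cons_head, Nat.sub_add_cancel (by omega), Multiset.cons_erase hb]

end AddEndNode

section Multipartition

variable {k : ℕ}

lemma isMP_update {g : Fin k → Multiset ℕ} {m : ℕ} (hg : IsMP k g m) {i : Fin k}
    {ν : Multiset ℕ} (hpos : ∀ x ∈ ν, 0 < x) (hsum : ν.sum + 1 = (g i).sum) :
    IsMP k (update g i ν) (m - 1) := by
  refine ⟨fun j x hx => ?_, ?_⟩
  · rcases eq_or_ne j i with rfl | hj
    · exact hpos x (by simpa using hx)
    · exact hg.1 j x (by simpa [hj] using hx)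
  · have hi := Finset.mem_univ i
    rw [← hg.2, ← Finset.add_sum_erase _ _ hi, ← Finset.add_sum_erase _ _ hi, update_self, ← hsum,
      Finset.sum_congr rfl fun j hj => by rw [update_of_ne (Finset.ne_of_mem_erase hj)]]
    omega

lemma aSet_subset_range_of_forall_eq_zero {f : Fin k → Multiset ℕ} (hf : ∀ j, f j = 0) :
    ASet k f ⊆ Set.range fun i => update f i {1} := by
  rintro g (⟨hi, hne, -⟩ | ⟨-, i, hgj, hgi⟩)
  · exact absurd (hf hi) hne
  · exact ⟨i, (eq_update_iff.2 ⟨hgi, hgj⟩).symm⟩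

lemma aSet_subset_insert_range {f : Fin k → Multiset ℕ} {hi : Fin k} (hne : f hi ≠ 0)
    (hlast : ∀ j, hi < j → f j = 0) {a : ℕ} (ha : a ∈ f hi) (hmin : ∀ b ∈ f hi, a ≤ b) :
    ASet k f ⊆ insert (update f hi (1 ::ₘ f hi))
      (Set.range fun i => update f i (if i = hi then (a + 1) ::ₘ (f hi).erase a else {1})) := by
  rintro g (⟨hi', hne', hlast', hg⟩ | ⟨hzero, -⟩)
  · obtain rfl : hi' = hi :=
      le_antisymm (le_of_forall_lt_eq_zero hne' hlast) (le_of_forall_lt_eq_zero hne hlast')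
    rcases hg with ⟨hgj, hadd⟩ | ⟨i, hlt, hgj, hgi⟩
    · obtain hμ | hμ := hadd.eq_or_eq_of_min ha hmin
      · exact .inl (eq_update_iff.2 ⟨hμ, hgj⟩)
      · exact .inr ⟨hi', (eq_update_iff.2 ⟨by rwa [if_pos rfl], hgj⟩).symm⟩
    · exact .inr ⟨i, (eq_update_iff.2 ⟨by rwa [if_neg hlt.ne'], hgj⟩).symm⟩
  · exact absurd (hzero hi) hne

lemma ncard_aSet_le (f : Fin k → Multiset ℕ) : (ASet k f).ncard ≤ k + 1 := by
  have hrange : ∀ F : Fin k → Fin k → Multiset ℕ, (Set.range F).ncard ≤ k := fun F => by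
    simpa [← Set.image_univ] using Set.ncard_image_le (f := F) (s := Set.univ)
  by_cases hf : ∀ j, f j = 0
  · exact (Set.ncard_le_ncard (aSet_subset_range_of_forall_eq_zero hf)).trans
      ((hrange _).trans k.le_succ)
  obtain ⟨hi, hne, hlast⟩ := exists_last_ne_zero (not_forall.1 hf)
  obtain ⟨a, ha, hmin⟩ := Multiset.exists_min_of_ne_zero hne
  calc (ASet k f).ncard ≤ _ := Set.ncard_le_ncard (aSet_subset_insert_range hne hlast ha hmin)
    _ ≤ _ := Set.ncard_insert_le _ _
    _ ≤ k + 1 := Nat.add_le_add_right (hrange _) 1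

lemma mem_aSet_update_of_addEndNode {g : Fin k → Multiset ℕ} {hi : Fin k}
    (hlast : ∀ j, hi < j → g j = 0) {ν : Multiset ℕ} (h : AddEndNode ν (g hi)) :
    g ∈ ASet k (update g hi ν) := by
  set f := update g hi ν
  have hgj : ∀ j, j ≠ hi → g j = f j := fun j hj => (update_of_ne hj ν g).symm
  by_cases hν : ν = 0
  · subst hν
    have hone := h.eq_singleton_one_of_zero
    by_cases hf : ∀ j, f j = 0
    · exact .inr ⟨hf, hi, hgj, hone⟩
    obtain ⟨hi', hne', hlast'⟩ := exists_last_ne_zero (not_forall.1 hf)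
    have hflast : ∀ j, hi < j → f j = 0 := fun j hj => (hgj j hj.ne').symm.trans (hlast j hj)
    have hlt : hi' < hi := lt_of_le_of_ne (le_of_forall_lt_eq_zero hne' hflast)
      fun h => hne' (h ▸ update_self hi 0 g)
    exact .inl ⟨hi', hne', hlast', .inr ⟨hi, hlt, hgj, hone⟩⟩
  · exact .inl ⟨hi, by simpa [f] using hν, fun j hj => (hgj j hj.ne').symm.trans (hlast j hj),
      .inl ⟨hgj, by simpa [f] using h⟩⟩

lemma exists_isMP_mem_aSet {g : Fin k → Multiset ℕ} {n : ℕ} (hg : IsMP k g n) (hn : 1 ≤ n) :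
    ∃ f, IsMP k f (n - 1) ∧ g ∈ ASet k f := by
  have hg0 : ∃ i, g i ≠ 0 := by
    by_contra! h
    have : n = 0 := by simpa [h] using hg.2.symm
    omega
  obtain ⟨hi, hne, hlast⟩ := exists_last_ne_zero hg0
  obtain ⟨ν, hpos, hsum, hadd⟩ := AddEndNode.exists_of_ne_zero hne (hg.1 hi)
  exact ⟨_, isMP_update hg hpos hsum, mem_aSet_update_of_addEndNode hlast hadd⟩

end Multipartition

theorem multipartition_covering_general (k n : ℕ) (hn : 1 ≤ n) :
    (∀ f : Fin k → Multiset ℕ, IsMP k f (n - 1) → (ASet k f).ncard ≤ k + 1) ∧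
    (∀ g : Fin k → Multiset ℕ, IsMP k g n →
      ∃ f : Fin k → Multiset ℕ, IsMP k f (n - 1) ∧ g ∈ ASet k f) :=
  ⟨fun f _ => ncard_aSet_le f, fun _ hg => exists_isMP_mem_aSet hg hn⟩

theorem multipartition_covering (k n : ℕ) (hk : 1 ≤ k) (hn : 1 ≤ n) :
    (∀ f : Fin k → Multiset ℕ, IsMP k f (n - 1) → (ASet k f).ncard ≤ k + 1) ∧
    (∀ g : Fin k → Multiset ℕ, IsMP k g n →
      ∃ f : Fin k → Multiset ℕ, IsMP k f (n - 1) ∧ g ∈ ASet k f) :=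
  multipartition_covering_general k n hn
end
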